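/- arXiv:2303.10496 — 4 statements merged into one kernel-verified Lean document; each statement's English description precedes it below -/
import Mathlib

section
/- Let K : ℤ³ → ℂ be absolutely summable and let f, g, h : ℤ → ℂ. Define the trilinear pseudoproduct T(f,g,h) : ℤ → ℂ by T(f,g,h)_m = ∑_{k₁,k₂,k₃ ∈ ℤ} f_{k₁ − m} · g_{k₂ + k₁ − m} · h_{k₃ + k₁ − m} · K_{k₁,k₂,k₃}. Then for all exponents 1 ≤ p₁, p₂, p₃, q ≤ ∞ with 1/p₁ + 1/p₂ + 1/p₃ = 1/q, if f ∈ ℓ^{p₁}(ℤ), g ∈ ℓ^{p₂}(ℤ), h ∈ ℓ^{p₃}(ℤ), then T(f,g,h) ∈ ℓ^q(ℤ) and ‖T(f,g,h)‖_{ℓ^q} ≤ ‖K‖_{ℓ¹(ℤ³)} · ‖f‖_{ℓ^{p₁}} · ‖g‖_{ℓ^{p₂}} · ‖h‖_{ℓ^{p₃}}. -/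
/-!
Summing over `k` first, `pseudoProd K f g h = ∑' k, K k • (f' * g' * h')`, where `f'`, `g'`, `h'`
are reflected translates `m ↦ f (a - m)` of `f`, `g`, `h`. Reflected translation is a bijection
of `ℤ`, so it preserves `ℓ^p` norms, and the three-factor Hölder inequality bounds the `ℓ^q` norm
of the `k`-th term by `‖K k‖ * ‖f‖ * ‖g‖ * ‖h‖`. These bounds are summable, so Minkowski's
inequality for series gives the estimate; the same summable majorant also dominates the terms
pointwise, which makes the series defining the pseudoproduct converge absolutely at every `m`.
-/

open MeasureTheory Filter
open scoped ENNReal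

/-- The trilinear pseudoproduct with kernel `K`. -/
noncomputable def pseudoProd (K : ℤ × ℤ × ℤ → ℂ) (f g h : ℤ → ℂ) (m : ℤ) : ℂ :=
  ∑' k : ℤ × ℤ × ℤ, f (k.1 - m) * g (k.2.1 + k.1 - m) * h (k.2.2 + k.1 - m) * K k

section General

variable {α β E : Type*} [MeasurableSpace α] [MeasurableSpace β]

section NormedRing

variable {𝕜 : Type*} [NormedRing 𝕜] {μ : Measure α} {f g h : α → 𝕜}

theorem eLpNorm_mul_le {p q r : ℝ≥0∞} [ENNReal.HolderTriple p q r]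
    (hf : AEStronglyMeasurable f μ) (hg : AEStronglyMeasurable g μ) :
    eLpNorm (f * g) r μ ≤ eLpNorm f p μ * eLpNorm g q μ := by
  have hfg := eLpNorm_le_eLpNorm_mul_eLpNorm_of_nnnorm (p := p) (q := q) (r := r) hf hg (· * ·) 1
    (.of_forall fun _ => by simpa using nnnorm_mul_le _ _)
  rwa [ENNReal.coe_one, one_mul] at hfg

theorem eLpNorm_mul_mul_le (hf : AEStronglyMeasurable f μ) (hg : AEStronglyMeasurable g μ)
    (hh : AEStronglyMeasurable h μ) {p₁ p₂ p₃ q : ℝ≥0∞} (hpq : p₁⁻¹ + p₂⁻¹ + p₃⁻¹ = q⁻¹) :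
    eLpNorm (f * g * h) q μ ≤ eLpNorm f p₁ μ * eLpNorm g p₂ μ * eLpNorm h p₃ μ := by
  have : ENNReal.HolderTriple p₁ p₂ (p₁⁻¹ + p₂⁻¹)⁻¹ := ⟨by rw [inv_inv]⟩
  have : ENNReal.HolderTriple (p₁⁻¹ + p₂⁻¹)⁻¹ p₃ q := ⟨by rw [inv_inv, hpq]⟩
  calc eLpNorm (f * g * h) q μ ≤ eLpNorm (f * g) (p₁⁻¹ + p₂⁻¹)⁻¹ μ * eLpNorm h p₃ μ :=
        eLpNorm_mul_le (hf.mul hg) hh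
    _ ≤ eLpNorm f p₁ μ * eLpNorm g p₂ μ * eLpNorm h p₃ μ := by
        gcongr
        exact eLpNorm_mul_le hf hg

end NormedRing

theorem eLpNorm_le_tsum_of_hasSum [NormedAddCommGroup E] {ι : Type*} [Countable ι]
    {μ : Measure α} {p : ℝ≥0∞} (hp : 1 ≤ p) {F : ι → α → E} {G : α → E}
    (hF : ∀ i, AEStronglyMeasurable (F i) μ) (hG : ∀ᵐ x ∂μ, HasSum (F · x) (G x)) :
    eLpNorm G p μ ≤ ∑' i, eLpNorm (F i) p μ := by
  refine Lp.eLpNorm_le_of_ae_tendsto (u := atTop) (f := fun s : Finset ι => ∑ i ∈ s, F i)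
    (.of_forall fun s => ?_) (fun s => Finset.aestronglyMeasurable_sum s fun i _ => hF i) ?_
  · exact (eLpNorm_sum_le (fun i _ => hF i) hp).trans (ENNReal.sum_le_tsum s)
  · filter_upwards [hG] with x hx
    simp only [Finset.sum_apply]
    exact hx

theorem eLpNorm_tsum_le [NormedAddCommGroup E] [CompleteSpace E] {ι : Type*} [Countable ι]
    {μ : Measure α} {p : ℝ≥0∞} (hp : 1 ≤ p) {F : ι → α → E}
    (hF : ∀ i, AEStronglyMeasurable (F i) μ) (hsum : ∑' i, eLpNorm (F i) p μ ≠ ∞) :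
    eLpNorm (fun x => ∑' i, F i x) p μ ≤ ∑' i, eLpNorm (F i) p μ := by
  refine eLpNorm_le_tsum_of_hasSum hp hF ?_
  filter_upwards [summable_norm_of_tsum_eLpNorm_ne_top hp hF hsum] with x hx
  exact (Summable.of_norm hx).hasSum

theorem MeasurableEquiv.measurePreserving_count [MeasurableSingletonClass α]
    [MeasurableSingletonClass β] (e : α ≃ᵐ β) :
    MeasurePreserving e Measure.count Measure.count := by
  refine ⟨e.measurable, le_antisymm (e.injective.map_count_le e.measurable) ?_⟩
  calc Measure.count = (Measure.count.map e.symm).map e := e.map_map_symm.symm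
    _ ≤ Measure.count.map e :=
        Measure.map_mono (e.symm.injective.map_count_le e.symm.measurable) e.measurable

theorem MeasurableEquiv.eLpNorm_comp_count [MeasurableSingletonClass α]
    [MeasurableSingletonClass β] [NormedAddCommGroup E] (e : α ≃ᵐ β) (f : β → E)
    (p : ℝ≥0∞) : eLpNorm (f ∘ e) p Measure.count = eLpNorm f p Measure.count := by
  rw [← e.measurableEmbedding.eLpNorm_map_measure, e.measurePreserving_count.map_eq]

end General

-- `pseudoProd K f g h m = ∑' k, pseudoTerm K f g h k m` holds by `rfl`.
noncomputable def pseudoTerm (K : ℤ × ℤ × ℤ → ℂ) (f g h : ℤ → ℂ) (k : ℤ × ℤ × ℤ)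
    (m : ℤ) : ℂ :=
  f (k.1 - m) * g (k.2.1 + k.1 - m) * h (k.2.2 + k.1 - m) * K k

theorem eLpNorm_pseudoTerm_le (K : ℤ × ℤ × ℤ → ℂ) (f g h : ℤ → ℂ) (k : ℤ × ℤ × ℤ)
    {p₁ p₂ p₃ q : ℝ≥0∞} (hpq : p₁⁻¹ + p₂⁻¹ + p₃⁻¹ = q⁻¹) :
    eLpNorm (pseudoTerm K f g h k) q Measure.count ≤ ‖K k‖ₑ *
      (eLpNorm f p₁ Measure.count * eLpNorm g p₂ Measure.count * eLpNorm h p₃ Measure.count) := by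
  set f' := f ∘ MeasurableEquiv.subLeft k.1
  set g' := g ∘ MeasurableEquiv.subLeft (k.2.1 + k.1)
  set h' := h ∘ MeasurableEquiv.subLeft (k.2.2 + k.1)
  have hterm : pseudoTerm K f g h k = K k • (f' * g' * h') := by
    ext m
    change _ = K k * (f (k.1 - m) * g (k.2.1 + k.1 - m) * h (k.2.2 + k.1 - m))
    rw [pseudoTerm, mul_comm]
  calc eLpNorm (pseudoTerm K f g h k) q Measure.count
      = ‖K k‖ₑ * eLpNorm (f' * g' * h') q Measure.count := by
        rw [hterm, eLpNorm_const_smul]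
    _ ≤ ‖K k‖ₑ * (eLpNorm f' p₁ Measure.count * eLpNorm g' p₂ Measure.count *
          eLpNorm h' p₃ Measure.count) := by
        gcongr
        exact eLpNorm_mul_mul_le .of_discrete .of_discrete .of_discrete hpq
    _ = _ := by simp only [f', g', h', MeasurableEquiv.eLpNorm_comp_count]

theorem pseudoProd_bound_general (K : ℤ × ℤ × ℤ → ℂ) (hK : Summable fun k => ‖K k‖)
    (p₁ p₂ p₃ q : ℝ≥0∞) (hq : 1 ≤ q)
    (hpq : 1 / p₁ + 1 / p₂ + 1 / p₃ = 1 / q)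
    (f g h : ℤ → ℂ)
    (hf : eLpNorm f p₁ Measure.count < ⊤)
    (hg : eLpNorm g p₂ Measure.count < ⊤)
    (hh : eLpNorm h p₃ Measure.count < ⊤) :
    eLpNorm (pseudoProd K f g h) q Measure.count < ⊤ ∧
      eLpNorm (pseudoProd K f g h) q Measure.count ≤
        eLpNorm K 1 Measure.count * eLpNorm f p₁ Measure.count *
          eLpNorm g p₂ Measure.count * eLpNorm h p₃ Measure.count := by
  set C := eLpNorm f p₁ Measure.count * eLpNorm g p₂ Measure.count *
    eLpNorm h p₃ Measure.count
  have hK_norm : eLpNorm K 1 Measure.count = ∑' k, ‖K k‖ₑ := by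
    rw [eLpNorm_one_eq_lintegral_enorm, lintegral_count]
  have hK_fin : eLpNorm K 1 Measure.count < ∞ :=
    hK_norm ▸ (tsum_enorm_ne_top_iff_summable_norm.2 hK).lt_top
  have hterms : ∑' k, eLpNorm (pseudoTerm K f g h k) q Measure.count ≤
      eLpNorm K 1 Measure.count * C := by
    rw [hK_norm, ← ENNReal.tsum_mul_right]
    exact ENNReal.tsum_le_tsum fun k =>
      eLpNorm_pseudoTerm_le K f g h k (by simpa only [one_div] using hpq)
  have hfin : eLpNorm K 1 Measure.count * C < ∞ := by finiteness
  have hbound : eLpNorm (pseudoProd K f g h) q Measure.count ≤ eLpNorm K 1 Measure.count * C :=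
    (eLpNorm_tsum_le hq (fun _ => .of_discrete) (hterms.trans_lt hfin).ne).trans hterms
  refine ⟨hbound.trans_lt hfin, hbound.trans_eq ?_⟩
  simp only [C, mul_assoc]

/-- Boundedness of pseudoproducts with absolutely summable kernel on Hölder
triples of `ℓ^p` spaces over `ℤ`. -/
theorem pseudoProd_bound (K : ℤ × ℤ × ℤ → ℂ) (hK : Summable fun k => ‖K k‖)
    (p₁ p₂ p₃ q : ℝ≥0∞) (hp₁ : 1 ≤ p₁) (hp₂ : 1 ≤ p₂) (hp₃ : 1 ≤ p₃) (hq : 1 ≤ q)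
    (hpq : 1 / p₁ + 1 / p₂ + 1 / p₃ = 1 / q)
    (f g h : ℤ → ℂ)
    (hf : eLpNorm f p₁ Measure.count < ⊤)
    (hg : eLpNorm g p₂ Measure.count < ⊤)
    (hh : eLpNorm h p₃ Measure.count < ⊤) :
    eLpNorm (pseudoProd K f g h) q Measure.count < ⊤ ∧
      eLpNorm (pseudoProd K f g h) q Measure.count ≤
        eLpNorm K 1 Measure.count * eLpNorm f p₁ Measure.count *
          eLpNorm g p₂ Measure.count * eLpNorm h p₃ Measure.count :=
  pseudoProd_bound_general K hK p₁ p₂ p₃ q hq hpq f g h hf hg hh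
end

section
/- Fix an integer N ≥ 1. There is a constant C depending only on N with the following property. Let A > 0, α ∈ (0,1], and let K : ℤ → ℂ satisfy |K_m| ≤ A·α·(1+α|m|)^{−N−2} for all m ∈ ℤ. Let R ≥ 0 and let f, g : ℤ → ℂ be sequences such that |m − m'| ≥ R for every m in the support of f and every m' in the support of g. Then for all exponents 1 ≤ p₁, p₂, p ≤ ∞ with 1/p₁ + 1/p₂ = 1/p, the pointwise product of f with the convolution K∗g (where (K∗g)_n = ∑_{m∈ℤ} K_{n−m} g_m) satisfies ‖f·(K∗g)‖_{ℓ^p} ≤ C · A · (1 + αR)^{−N} · ‖f‖_{ℓ^{p₁}} ‖g‖_{ℓ^{p₂}}. -/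
open MeasureTheory
open scoped ENNReal

/-! For `n` in the support of `f` and `m` in that of `g` we have `|n - m| ≥ R`, so only the tail
of the kernel is seen, where `|K_k| ≤ A (1 + αR)^(-N) · α (1 + α|k|)^(-2)`. The second factor has
`ℓ¹(ℤ)`-norm at most `3`, so Hölder's inequality followed by Young's inequality
`‖h ∗ G‖_q ≤ ‖h‖_1 ‖G‖_q` gives the bound with `C = 3`. -/

theorem ENNReal.rpow_tsum_mul_le {ι : Type*} (w x : ι → ℝ≥0∞) {t : ℝ} (ht : 1 ≤ t) :
    (∑' i, w i * x i) ^ t ≤ (∑' i, w i) ^ (t - 1) * ∑' i, w i * x i ^ t := by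
  rcases ht.eq_or_lt with rfl | ht
  · simp
  let _ : MeasurableSpace ι := ⊤
  have hconj : t.conjExponent.HolderConjugate t := (Real.HolderConjugate.conjExponent ht).symm
  have holder := ENNReal.lintegral_mul_le_Lp_mul_Lq (Measure.count.withDensity w) hconj
    (f := 1) (g := x) aemeasurable_const .of_discrete
  simp only [Pi.one_apply, one_mul, ENNReal.one_rpow, mul_one,
    lintegral_withDensity_eq_lintegral_mul _ Measurable.of_discrete Measurable.of_discrete,
    lintegral_count, Pi.mul_apply] at holder
  calc (∑' i, w i * x i) ^ t
      ≤ ((∑' i, w i) ^ (1 / t.conjExponent) * (∑' i, w i * x i ^ t) ^ (1 / t)) ^ t := by gcongr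
    _ = (∑' i, w i) ^ (t - 1) * ∑' i, w i * x i ^ t := by
      rw [ENNReal.mul_rpow_of_nonneg _ _ (by positivity), ← ENNReal.rpow_mul, ← ENNReal.rpow_mul,
        one_div_mul_cancel (by positivity), ENNReal.rpow_one, Real.conjExponent]
      congr 2
      field_simp

section Convolution

variable {Γ : Type*} [AddGroup Γ]

theorem tsum_comp_sub_left {α : Type*} [AddCommMonoid α] [TopologicalSpace α] (h : Γ → α)
    (n : Γ) : ∑' m, h (n - m) = ∑' k, h k :=
  (Equiv.subLeft n).tsum_eq h

theorem tsum_comp_sub_right {α : Type*} [AddCommMonoid α] [TopologicalSpace α] (h : Γ → α)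
    (m : Γ) : ∑' n, h (n - m) = ∑' k, h k :=
  (Equiv.subRight m).tsum_eq h

theorem ENNReal.tsum_conv_rpow_le (h G : Γ → ℝ≥0∞) {t : ℝ} (ht : 1 ≤ t) :
    ∑' n, (∑' m, h (n - m) * G m) ^ t ≤ (∑' k, h k) ^ t * ∑' m, G m ^ t := by
  set S := ∑' k, h k
  calc ∑' n, (∑' m, h (n - m) * G m) ^ t
      ≤ ∑' n, S ^ (t - 1) * ∑' m, h (n - m) * G m ^ t := by
        refine ENNReal.tsum_le_tsum fun n => ?_
        simpa only [tsum_comp_sub_left] using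
          ENNReal.rpow_tsum_mul_le (fun m => h (n - m)) G ht
    _ = S ^ (t - 1) * (S * ∑' m, G m ^ t) := by
        rw [ENNReal.tsum_mul_left, ENNReal.tsum_comm]
        simp_rw [ENNReal.tsum_mul_right, tsum_comp_sub_right, ENNReal.tsum_mul_left, S]
    _ = S ^ t * ∑' m, G m ^ t := by
        rw [← mul_assoc]
        nth_rw 2 [← ENNReal.rpow_one S]
        rw [← ENNReal.rpow_add_of_nonneg _ _ (by linarith) zero_le_one, sub_add_cancel]

theorem enorm_tsum_conv_le {𝕜 : Type*} [NormedRing 𝕜] (K g : Γ → 𝕜) (h : Γ → ℝ≥0∞) (n : Γ)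
    (hK : ∀ m ∈ Function.support g, ‖K (n - m)‖ₑ ≤ h (n - m)) :
    ‖∑' m, K (n - m) * g m‖ₑ ≤ ∑' m, h (n - m) * ‖g m‖ₑ := by
  refine enorm_tsum_le_tsum_enorm.trans (ENNReal.tsum_le_tsum fun m => ?_)
  by_cases hm : g m = 0
  · simp [hm]
  · exact (enorm_smul_le (r := K (n - m)) (x := g m)).trans (by gcongr; exact hK m hm)

variable [MeasurableSpace Γ] [MeasurableSingletonClass Γ] {E F : Type*} [ENorm E] [ENorm F]

theorem eLpNorm_count_le_tsum_mul_of_enorm_le_conv {q : ℝ≥0∞} (hq : 1 ≤ q) (h : Γ → ℝ≥0∞)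
    {u : Γ → E} {g : Γ → F} (hu : ∀ n, ‖u n‖ₑ ≤ ∑' m, h (n - m) * ‖g m‖ₑ) :
    eLpNorm u q Measure.count ≤ (∑' k, h k) * eLpNorm g q Measure.count := by
  rcases eq_or_ne q ∞ with rfl | hq_top
  · simp only [eLpNorm_exponent_top, eLpNormEssSup_count]
    refine iSup_le fun n => (hu n).trans ?_
    calc ∑' m, h (n - m) * ‖g m‖ₑ ≤ ∑' m, h (n - m) * ⨆ m', ‖g m'‖ₑ := by
          gcongr with m
          exact le_iSup (fun m' => ‖g m'‖ₑ) m
      _ = (∑' k, h k) * ⨆ m', ‖g m'‖ₑ := by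
          rw [ENNReal.tsum_mul_right, tsum_comp_sub_left]
  have ht : 1 ≤ q.toReal := by
    simpa using ENNReal.toReal_mono hq_top hq
  have hq0 : q ≠ 0 := (zero_lt_one.trans_le hq).ne'
  simp only [eLpNorm_eq_lintegral_rpow_enorm_toReal hq0 hq_top, lintegral_count]
  calc (∑' n, ‖u n‖ₑ ^ q.toReal) ^ (1 / q.toReal)
      ≤ ((∑' k, h k) ^ q.toReal * ∑' m, ‖g m‖ₑ ^ q.toReal) ^ (1 / q.toReal) := by
        gcongr
        refine (ENNReal.tsum_le_tsum fun n => ?_).trans (ENNReal.tsum_conv_rpow_le _ _ ht)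
        gcongr
        exact hu n
    _ = (∑' k, h k) * (∑' m, ‖g m‖ₑ ^ q.toReal) ^ (1 / q.toReal) := by
        rw [ENNReal.mul_rpow_of_nonneg _ _ (by positivity), one_div,
          ENNReal.rpow_rpow_inv (by positivity)]

end Convolution

theorem tsum_ofReal_div_one_add_mul_succ_sq_le_one {α : ℝ} (hα : 0 < α) :
    ∑' n : ℕ, ENNReal.ofReal (α / (1 + α * (n + 1)) ^ 2) ≤ 1 := by
  refine ENNReal.tsum_le_of_sum_range_le fun M => ?_
  rw [← ENNReal.ofReal_sum_of_nonneg fun n _ => by positivity, ENNReal.ofReal_le_one]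
  set a : ℕ → ℝ := fun n => 1 / (1 + α * n)
  -- each term is dominated by a term of the telescoping series `∑ (a n - a (n + 1))`
  have hterm (n : ℕ) : α / (1 + α * (n + 1)) ^ 2 ≤ a n - a (n + 1) := by
    have h₀ : 0 < 1 + α * n := by positivity
    have h₁ : 0 < 1 + α * (n + 1) := by positivity
    simp only [a, Nat.cast_add, Nat.cast_one]
    rw [div_sub_div _ _ h₀.ne' h₁.ne', div_le_div_iff₀ (by positivity) (by positivity)]
    nlinarith [mul_pos (mul_pos hα h₁) hα]
  calc ∑ n ∈ Finset.range M, α / (1 + α * (n + 1)) ^ 2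
      ≤ ∑ n ∈ Finset.range M, (a n - a (n + 1)) := Finset.sum_le_sum fun n _ => hterm n
    _ = a 0 - a M := Finset.sum_range_sub' a M
    _ ≤ 1 := by simp only [a]; norm_num; positivity

theorem tsum_ofReal_div_one_add_mul_abs_sq_le_three {α : ℝ} (hα₀ : 0 < α) (hα₁ : α ≤ 1) :
    ∑' k : ℤ, ENNReal.ofReal (α / (1 + α * |(k : ℝ)|) ^ 2) ≤ 3 := by
  rw [tsum_of_add_one_of_neg_add_one (M := ℝ≥0∞) ENNReal.summable ENNReal.summable]
  have hpos : ∑' n : ℕ, ENNReal.ofReal (α / (1 + α * |((n + 1 : ℤ) : ℝ)|) ^ 2) ≤ 1 := by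
    convert tsum_ofReal_div_one_add_mul_succ_sq_le_one hα₀ using 5
    push_cast
    rw [abs_of_nonneg (by positivity)]
  have hneg : ∑' n : ℕ, ENNReal.ofReal (α / (1 + α * |((-(n + 1) : ℤ) : ℝ)|) ^ 2) ≤ 1 := by
    convert tsum_ofReal_div_one_add_mul_succ_sq_le_one hα₀ using 5
    push_cast
    rw [abs_neg, abs_of_nonneg (by positivity)]
  have hzero : ENNReal.ofReal (α / (1 + α * |((0 : ℤ) : ℝ)|) ^ 2) ≤ 1 := by
    simpa using hα₁
  calc _ ≤ (1 : ℝ≥0∞) + 1 + 1 := by gcongr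
    _ = 3 := by norm_num

theorem div_one_add_mul_pow_add_two_le {A α R x : ℝ} (N : ℕ) (hA : 0 ≤ A) (hα : 0 ≤ α)
    (hR : 0 ≤ R) (hRx : R ≤ x) :
    A * α / (1 + α * x) ^ (N + 2) ≤ A / (1 + α * R) ^ N * (α / (1 + α * x) ^ 2) := by
  rw [pow_add, mul_div_mul_comm]
  gcongr

section TailMajorant

variable {A α R : ℝ} {N : ℕ}

/-- Majorant of `‖K k‖` for `|k| ≥ R` when `‖K k‖ ≤ A α (1 + α|k|)^(-N-2)`. -/
noncomputable def tailMajorant (A α R : ℝ) (N : ℕ) (k : ℤ) : ℝ≥0∞ :=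
  ENNReal.ofReal (A / (1 + α * R) ^ N) * ENNReal.ofReal (α / (1 + α * |(k : ℝ)|) ^ 2)

theorem tsum_tailMajorant_le (hα₀ : 0 < α) (hα₁ : α ≤ 1) :
    ∑' k, tailMajorant A α R N k ≤ ENNReal.ofReal (3 * A / (1 + α * R) ^ N) := by
  unfold tailMajorant
  rw [ENNReal.tsum_mul_left, mul_div_assoc, ENNReal.ofReal_mul zero_le_three,
    ENNReal.ofReal_ofNat, mul_comm (3 : ℝ≥0∞)]
  gcongr
  exact tsum_ofReal_div_one_add_mul_abs_sq_le_three hα₀ hα₁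

theorem enorm_indicator_conv_le_tailMajorant (hA : 0 ≤ A) (hα : 0 ≤ α) (hR : 0 ≤ R)
    {K f g : ℤ → ℂ} (hK : ∀ m : ℤ, ‖K m‖ ≤ A * α / (1 + α * |(m : ℝ)|) ^ (N + 2))
    (hsep : ∀ m ∈ Function.support f, ∀ m' ∈ Function.support g, R ≤ |((m - m' : ℤ) : ℝ)|)
    (n : ℤ) :
    ‖(Function.support f).indicator (fun n => ∑' m, K (n - m) * g m) n‖ₑ ≤
      ∑' m, tailMajorant A α R N (n - m) * ‖g m‖ₑ := by
  by_cases hn : n ∈ Function.support f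
  · rw [Set.indicator_of_mem hn]
    refine enorm_tsum_conv_le K g _ n fun m hm => ?_
    rw [tailMajorant, ← ENNReal.ofReal_mul (by positivity), ← ofReal_norm]
    exact ENNReal.ofReal_le_ofReal <| (hK _).trans <|
      div_one_add_mul_pow_add_two_le N hA hα hR (hsep n hn m hm)
  · simp [Set.indicator_of_notMem hn]

end TailMajorant

theorem conv_pseudolocal_general (N : ℕ) :
    ∃ C : ℝ, 0 < C ∧
      ∀ (A α : ℝ), 0 < A → α ∈ Set.Ioc (0 : ℝ) 1 →
      ∀ K : ℤ → ℂ,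
        (∀ m : ℤ, ‖K m‖ ≤ A * α / (1 + α * |(m : ℝ)|) ^ (N + 2)) →
      ∀ R : ℝ, 0 ≤ R →
      ∀ f g : ℤ → ℂ,
        (∀ m ∈ Function.support f, ∀ m' ∈ Function.support g, R ≤ |((m - m' : ℤ) : ℝ)|) →
      ∀ p₁ p₂ p : ℝ≥0∞, 1 ≤ p₁ → 1 ≤ p₂ → 1 ≤ p →
        1 / p₁ + 1 / p₂ = 1 / p →
        eLpNorm (fun n : ℤ => f n * ∑' m : ℤ, K (n - m) * g m) p Measure.count ≤
          ENNReal.ofReal (C * A / (1 + α * R) ^ N) *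
            (eLpNorm f p₁ Measure.count * eLpNorm g p₂ Measure.count) := by
  refine ⟨3, by norm_num, fun A α hA ⟨hα₀, hα₁⟩ K hK R hR f g hsep p₁ p₂ p _ hp₂ _ hp => ?_⟩
  set u := (Function.support f).indicator fun n => ∑' m, K (n - m) * g m
  have hfu : (fun n => f n * ∑' m, K (n - m) * g m) = f • u := by
    ext n
    by_cases hn : f n = 0 <;> simp [u, hn]
  have : ENNReal.HolderTriple p₁ p₂ p := ⟨by simpa only [one_div] using hp⟩
  rw [hfu]
  calc eLpNorm (f • u) p Measure.count
      ≤ eLpNorm f p₁ Measure.count * eLpNorm u p₂ Measure.count :=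
        eLpNorm_smul_le_mul_eLpNorm .of_discrete .of_discrete
    _ ≤ eLpNorm f p₁ Measure.count *
          ((∑' k, tailMajorant A α R N k) * eLpNorm g p₂ Measure.count) := by
        gcongr
        exact eLpNorm_count_le_tsum_mul_of_enorm_le_conv hp₂ _
          (enorm_indicator_conv_le_tailMajorant hA.le hα₀.le hR hK hsep)
    _ ≤ _ := by
        rw [mul_left_comm]
        gcongr
        exact tsum_tailMajorant_le hα₀ hα₁

/-- Pseudolocality of frequency-localized convolution operators on `ℤ`:
if the kernel `K` decays at scale `α⁻¹` and the supports of `f` and `g` are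
separated by `R`, the product `f · (K ∗ g)` gains a factor `(1 + αR)^(-N)`. -/
theorem conv_pseudolocal (N : ℕ) (hN : 1 ≤ N) :
    ∃ C : ℝ, 0 < C ∧
      ∀ (A α : ℝ), 0 < A → α ∈ Set.Ioc (0 : ℝ) 1 →
      ∀ K : ℤ → ℂ,
        (∀ m : ℤ, ‖K m‖ ≤ A * α / (1 + α * |(m : ℝ)|) ^ (N + 2)) →
      ∀ R : ℝ, 0 ≤ R →
      ∀ f g : ℤ → ℂ,
        (∀ m ∈ Function.support f, ∀ m' ∈ Function.support g, R ≤ |((m - m' : ℤ) : ℝ)|) →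
      ∀ p₁ p₂ p : ℝ≥0∞, 1 ≤ p₁ → 1 ≤ p₂ → 1 ≤ p →
        1 / p₁ + 1 / p₂ = 1 / p →
        eLpNorm (fun n : ℤ => f n * ∑' m : ℤ, K (n - m) * g m) p Measure.count ≤
          ENNReal.ofReal (C * A / (1 + α * R) ^ N) *
            (eLpNorm f p₁ Measure.count * eLpNorm g p₂ Measure.count) :=
  conv_pseudolocal_general N
end

section
/- Define φ : ℝ³ → ℝ by φ(ξ,η,σ) = −2cos ξ + 2cos η + 2cos(ξ − η − σ) − 2cos σ. Fix ξ ∈ ℝ and set P₁ = (ξ, −ξ), P₂ = (π + ξ/3, ξ/3), P₃ = ((ξ−π)/3, (ξ+2π)/3), P₄ = ((ξ+π)/3, (ξ−2π)/3). Then at each point (η,σ) = P_j (j = 1,2,3,4) the partial derivatives ∂φ/∂η and ∂φ/∂σ both vanish, and the values of φ there are: φ(ξ, P₁) = 0, φ(ξ, P₂) = −8cos³(ξ/3), φ(ξ, P₃) = 8cos³((π−ξ)/3), φ(ξ, P₄) = 8cos³((ξ+π)/3). -/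
/-- The Ablowitz–Ladik resonance phase function. -/
noncomputable def phiAL (ξ η σ : ℝ) : ℝ :=
  -2 * Real.cos ξ + 2 * Real.cos η + 2 * Real.cos (ξ - η - σ) - 2 * Real.cos σ

/-! With θ = ξ − η − σ, the partial derivatives of φ in η and σ are 2 sin θ − 2 sin η and
2 sin θ + 2 sin σ, so (η, σ) is stationary as soon as sin θ = sin η = −sin σ. At P₁ this holds
because θ = η = ξ = −σ; at P₂, P₃, P₄ because θ ≡ η and σ ≡ η + π (mod 2π). In the latter case
ξ = η + σ + θ ≡ 3η + π, so φ = 2 cos 3η + 6 cos η = 8 cos³ η by the triple-angle formula. -/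

open Real

theorem hasDerivAt_phiAL_eta (ξ η σ : ℝ) :
    HasDerivAt (fun y => phiAL ξ y σ) (2 * sin (ξ - η - σ) - 2 * sin η) η := by
  have hθ := (((hasDerivAt_id η).const_sub ξ).sub_const σ).cos
  refine ((((hasDerivAt_cos η).const_mul 2).const_add (-2 * cos ξ)).add
    (hθ.const_mul 2)).sub_const (2 * cos σ) |>.congr_deriv ?_
  simp only [id]; ring

theorem hasDerivAt_phiAL_sigma (ξ η σ : ℝ) :
    HasDerivAt (fun s => phiAL ξ η s) (2 * sin (ξ - η - σ) + 2 * sin σ) σ := by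
  have hθ := ((hasDerivAt_id σ).const_sub (ξ - η)).cos
  refine ((hθ.const_mul 2).const_add (-2 * cos ξ + 2 * cos η)).sub
    ((hasDerivAt_cos σ).const_mul 2) |>.congr_deriv ?_
  simp only [id]; ring

def IsStationaryPoint (ξ η σ : ℝ) : Prop :=
  HasDerivAt (fun y => phiAL ξ y σ) 0 η ∧ HasDerivAt (fun s => phiAL ξ η s) 0 σ

theorem isStationaryPoint_of_sin_eq {ξ η σ : ℝ} (hθ : sin (ξ - η - σ) = sin η)
    (hσ : sin σ = -sin η) : IsStationaryPoint ξ η σ := by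
  constructor
  · simpa [hθ] using hasDerivAt_phiAL_eta ξ η σ
  · simpa [hθ, hσ] using hasDerivAt_phiAL_sigma ξ η σ

theorem isStationaryPoint_and_phiAL_eq_of_coe_eq {ξ η σ : ℝ}
    (hθ : ((ξ - η - σ : ℝ) : Angle) = η) (hσ : (σ : Angle) = (η + π : ℝ)) :
    IsStationaryPoint ξ η σ ∧ phiAL ξ η σ = 8 * cos η ^ 3 := by
  have hξ : (ξ : Angle) = (3 * η + π : ℝ) := by
    calc (ξ : Angle) = ((ξ - η - σ : ℝ) : Angle) + η + σ := by
          rw [← Angle.coe_add, ← Angle.coe_add]; congr 1; ring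
      _ = (3 * η + π : ℝ) := by
          rw [hθ, hσ, ← Angle.coe_add, ← Angle.coe_add]; congr 1; ring
  have sin_eq {x y : ℝ} (h : (x : Angle) = y) : sin x = sin y := by
    simpa using congrArg Angle.sin h
  have cos_eq {x y : ℝ} (h : (x : Angle) = y) : cos x = cos y := by
    simpa using congrArg Angle.cos h
  refine ⟨isStationaryPoint_of_sin_eq (sin_eq hθ) ((sin_eq hσ).trans (sin_add_pi η)), ?_⟩
  rw [phiAL, cos_eq hθ, cos_eq hσ, cos_eq hξ, cos_add_pi, cos_add_pi, cos_three_mul]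
  ring

/-- For fixed `ξ`, the points `P₁ = (ξ, −ξ)`, `P₂ = (π + ξ/3, ξ/3)`,
`P₃ = ((ξ−π)/3, (ξ+2π)/3)`, `P₄ = ((ξ+π)/3, (ξ−2π)/3)` are stationary points of
`φ(ξ,·,·)`, and `φ` takes the values `0`, `−8cos³(ξ/3)`, `8cos³((π−ξ)/3)`,
`8cos³((ξ+π)/3)` there. -/
theorem phiAL_stationary_points (ξ : ℝ) :
    (HasDerivAt (fun y => phiAL ξ y (-ξ)) 0 ξ ∧
      HasDerivAt (fun s => phiAL ξ ξ s) 0 (-ξ) ∧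
      phiAL ξ ξ (-ξ) = 0) ∧
    (HasDerivAt (fun y => phiAL ξ y (ξ / 3)) 0 (Real.pi + ξ / 3) ∧
      HasDerivAt (fun s => phiAL ξ (Real.pi + ξ / 3) s) 0 (ξ / 3) ∧
      phiAL ξ (Real.pi + ξ / 3) (ξ / 3) = -8 * Real.cos (ξ / 3) ^ 3) ∧
    (HasDerivAt (fun y => phiAL ξ y ((ξ + 2 * Real.pi) / 3)) 0 ((ξ - Real.pi) / 3) ∧
      HasDerivAt (fun s => phiAL ξ ((ξ - Real.pi) / 3) s) 0 ((ξ + 2 * Real.pi) / 3) ∧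
      phiAL ξ ((ξ - Real.pi) / 3) ((ξ + 2 * Real.pi) / 3) =
        8 * Real.cos ((Real.pi - ξ) / 3) ^ 3) ∧
    (HasDerivAt (fun y => phiAL ξ y ((ξ - 2 * Real.pi) / 3)) 0 ((ξ + Real.pi) / 3) ∧
      HasDerivAt (fun s => phiAL ξ ((ξ + Real.pi) / 3) s) 0 ((ξ - 2 * Real.pi) / 3) ∧
      phiAL ξ ((ξ + Real.pi) / 3) ((ξ - 2 * Real.pi) / 3) =
        8 * Real.cos ((ξ + Real.pi) / 3) ^ 3) := by
  have coe_eq_of_sub_eq {x y : ℝ} (h : x - y = -(2 * π)) : (x : Angle) = y :=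
    Angle.angle_eq_iff_two_pi_dvd_sub.2 ⟨-1, by rw [h]; simp⟩
  obtain ⟨h₁η, h₁σ⟩ : IsStationaryPoint ξ ξ (-ξ) :=
    isStationaryPoint_of_sin_eq (by congr 1; ring) (sin_neg ξ)
  obtain ⟨⟨h₂η, h₂σ⟩, h₂⟩ := isStationaryPoint_and_phiAL_eq_of_coe_eq (ξ := ξ)
    (η := π + ξ / 3) (σ := ξ / 3) (coe_eq_of_sub_eq (by ring)) (coe_eq_of_sub_eq (by ring))
  obtain ⟨⟨h₃η, h₃σ⟩, h₃⟩ := isStationaryPoint_and_phiAL_eq_of_coe_eq (ξ := ξ)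
    (η := (ξ - π) / 3) (σ := (ξ + 2 * π) / 3) (by congr 1; ring) (by congr 1; ring)
  obtain ⟨⟨h₄η, h₄σ⟩, h₄⟩ := isStationaryPoint_and_phiAL_eq_of_coe_eq (ξ := ξ)
    (η := (ξ + π) / 3) (σ := (ξ - 2 * π) / 3) (by congr 1; ring) (coe_eq_of_sub_eq (by ring))
  refine ⟨⟨h₁η, h₁σ, by simp [phiAL]⟩, ⟨h₂η, h₂σ, ?_⟩, ⟨h₃η, h₃σ, ?_⟩, ⟨h₄η, h₄σ, h₄⟩⟩
  · rw [h₂, add_comm, cos_add_pi]; ring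
  · rw [h₃, ← cos_neg]; ring_nf
end

section
/- There exists a constant C > 0 such that for every continuously differentiable 2π-periodic function g : ℝ → ℂ with g(π/2) = 0 and g(−π/2) = 0, one has ∫_{−π}^{π} |g(ξ)|² / cos²ξ dξ ≤ C ∫_{−π}^{π} |g'(ξ)|² dξ. -/
/-!
Write `q = dslope g c`, so that `g ξ = (ξ - c) q(ξ)` when `g c = 0`. On a half period around a
zero `c` of `cos` one has `|cos ξ| ≥ (2/π) |ξ - c|`, so `|g|² / cos² ≤ (π²/4) |q|²`, and the
classical Hardy inequality `∫ |q|² ≤ 4 ∫ |g'|²` finishes each of the two half periods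
`[-π, 0]` and `[0, π]`. The Hardy inequality itself comes from
`d/dx ((x - c) |q|²) = 2⟪q, g'⟫ - |q|² ≤ 2 |g'|² - |q|² / 2`, whose integral over `[a, b] ∋ c`
is the nonnegative boundary term `(b - c) |q(b)|² - (a - c) |q(a)|²`.
-/

open Real MeasureTheory Filter Topology Set intervalIntegral
open scoped InnerProductSpace

lemma Differentiable.continuous_dslope {𝕜 E : Type*} [NontriviallyNormedField 𝕜]
    [NormedAddCommGroup E] [NormedSpace 𝕜 E] {f : 𝕜 → E} (hf : Differentiable 𝕜 f) (c : 𝕜) :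
    Continuous (dslope f c) :=
  continuousOn_univ.1 ((continuousOn_dslope univ_mem).2 ⟨hf.continuous.continuousOn, hf c⟩)

section Hardy

variable {E : Type*} [NormedAddCommGroup E] [InnerProductSpace ℝ E] {f : ℝ → E} {a b c : ℝ}

lemma two_inner_sub_norm_sq_le (u v : E) :
    2 * ⟪u, v⟫_ℝ - ‖u‖ ^ 2 ≤ 2 * ‖v‖ ^ 2 - ‖u‖ ^ 2 / 2 := by
  have h := norm_sub_sq_real u ((2 : ℝ) • v)
  rw [inner_smul_right, norm_smul, Real.norm_two] at h
  nlinarith [sq_nonneg ‖u - (2 : ℝ) • v‖]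

lemma hasDerivAt_sub_mul_norm_sq_dslope (hf : Differentiable ℝ f) (x : ℝ) :
    HasDerivAt (fun y => (y - c) * ‖dslope f c y‖ ^ 2)
      (2 * ⟪dslope f c x, deriv f x⟫_ℝ - ‖dslope f c x‖ ^ 2) x := by
  rcases eq_or_ne x c with rfl | hx
  · rw [dslope_same, real_inner_self_eq_norm_sq, hasDerivAt_iff_tendsto_slope,
      show 2 * ‖deriv f x‖ ^ 2 - ‖deriv f x‖ ^ 2 = ‖deriv f x‖ ^ 2 by ring]
    have hq : ContinuousAt (dslope f x) x := continuousAt_dslope_same.2 (hf x)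
    have hlim : Tendsto (fun y => ‖dslope f x y‖ ^ 2) (𝓝[≠] x) (𝓝 (‖deriv f x‖ ^ 2)) := by
      simpa using (hq.norm.tendsto.pow 2).mono_left nhdsWithin_le_nhds
    refine hlim.congr' ?_
    filter_upwards [self_mem_nhdsWithin] with y hy
    rw [slope_def_field, sub_self, zero_mul, sub_zero]
    field_simp [sub_ne_zero.2 hy]
  · have hx' : x - c ≠ 0 := sub_ne_zero.2 hx
    have hquot : HasDerivAt (fun y => ‖f y - f c‖ ^ 2 / (y - c))
        ((2 * ⟪f x - f c, deriv f x⟫_ℝ * (x - c) - ‖f x - f c‖ ^ 2 * 1) / (x - c) ^ 2) x :=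
      ((hf x).hasDerivAt.sub_const (f c)).norm_sq.div ((hasDerivAt_id x).sub_const c) hx'
    refine (hquot.congr_of_eventuallyEq ?_).congr_deriv ?_
    · filter_upwards [isOpen_ne.mem_nhds hx] with y hy
      rw [← sub_smul_dslope f c y, norm_smul, Real.norm_eq_abs, mul_pow, sq_abs]
      field_simp [sub_ne_zero.2 hy]
    · rw [← sub_smul_dslope f c x, real_inner_smul_left, norm_smul, Real.norm_eq_abs, mul_pow,
        sq_abs]
      field_simp

theorem integral_norm_dslope_sq_le (hf : ContDiff ℝ 1 f) (hac : a ≤ c) (hcb : c ≤ b) :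
    ∫ x in a..b, ‖dslope f c x‖ ^ 2 ≤ 4 * ∫ x in a..b, ‖deriv f x‖ ^ 2 := by
  have hd : Differentiable ℝ f := hf.differentiable one_ne_zero
  have hq : Continuous (dslope f c) := hd.continuous_dslope c
  have hf' : Continuous (deriv f) := hf.continuous_deriv le_rfl
  have hFTC : ∫ x in a..b, (2 * ⟪dslope f c x, deriv f x⟫_ℝ - ‖dslope f c x‖ ^ 2) =
      (b - c) * ‖dslope f c b‖ ^ 2 - (a - c) * ‖dslope f c a‖ ^ 2 :=
    integral_eq_sub_of_hasDerivAt (fun x _ => hasDerivAt_sub_mul_norm_sq_dslope hd x)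
      (Continuous.intervalIntegrable (by fun_prop) _ _)
  have hboundary : 0 ≤ (b - c) * ‖dslope f c b‖ ^ 2 - (a - c) * ‖dslope f c a‖ ^ 2 := by
    nlinarith [mul_nonneg (sub_nonneg.2 hcb) (sq_nonneg ‖dslope f c b‖),
      mul_nonneg (sub_nonneg.2 hac) (sq_nonneg ‖dslope f c a‖)]
  have hmono : ∫ x in a..b, (2 * ⟪dslope f c x, deriv f x⟫_ℝ - ‖dslope f c x‖ ^ 2) ≤
      ∫ x in a..b, (2 * ‖deriv f x‖ ^ 2 - ‖dslope f c x‖ ^ 2 / 2) :=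
    integral_mono_on (hac.trans hcb) (Continuous.intervalIntegrable (by fun_prop) _ _)
      (Continuous.intervalIntegrable (by fun_prop) _ _) fun x _ => two_inner_sub_norm_sq_le _ _
  have hsplit : ∫ x in a..b, (2 * ‖deriv f x‖ ^ 2 - ‖dslope f c x‖ ^ 2 / 2) =
      2 * (∫ x in a..b, ‖deriv f x‖ ^ 2) - (∫ x in a..b, ‖dslope f c x‖ ^ 2) / 2 := by
    rw [integral_sub (Continuous.intervalIntegrable (by fun_prop) _ _)
      (Continuous.intervalIntegrable (by fun_prop) _ _), intervalIntegral.integral_const_mul,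
      intervalIntegral.integral_div]
  linarith

end Hardy

lemma mul_abs_sub_le_abs_cos {c ξ : ℝ} (hc : cos c = 0) (hξ : |ξ - c| ≤ π / 2) :
    2 / π * |ξ - c| ≤ |cos ξ| := by
  have hsin : |sin c| = 1 := by
    have h := sin_sq_add_cos_sq c
    rw [hc] at h
    nlinarith [sq_abs (sin c), abs_nonneg (sin c)]
  have hcos : cos ξ = -(sin c * sin (ξ - c)) := by
    simpa [hc] using cos_add c (ξ - c)
  rw [hcos, abs_neg, abs_mul, hsin, one_mul]
  exact mul_abs_le_abs_sin hξ

section CosineWeight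

variable {E : Type*} [NormedAddCommGroup E] [NormedSpace ℝ E] {g : ℝ → E} {a b c : ℝ}

lemma norm_sq_div_cos_sq_le {ξ : ℝ} (hc : cos c = 0) (hgc : g c = 0) (hξ : |ξ - c| ≤ π / 2) :
    ‖g ξ‖ ^ 2 / cos ξ ^ 2 ≤ π ^ 2 / 4 * ‖dslope g c ξ‖ ^ 2 := by
  have hπ := pi_pos
  have hdist : (ξ - c) ^ 2 ≤ π ^ 2 / 4 * cos ξ ^ 2 := by
    have h := mul_abs_sub_le_abs_cos hc hξ
    rw [div_mul_eq_mul_div, div_le_iff₀ hπ] at h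
    nlinarith [sq_abs (ξ - c), sq_abs (cos ξ), abs_nonneg (ξ - c)]
  rcases eq_or_ne (cos ξ) 0 with hcos | hcos
  · rw [hcos, zero_pow two_ne_zero, div_zero]
    positivity
  rw [div_le_iff₀ (by positivity), ← sub_zero (g ξ), ← hgc, ← sub_smul_dslope g c ξ, norm_smul,
    Real.norm_eq_abs, mul_pow, sq_abs]
  calc (ξ - c) ^ 2 * ‖dslope g c ξ‖ ^ 2 ≤ π ^ 2 / 4 * cos ξ ^ 2 * ‖dslope g c ξ‖ ^ 2 := by gcongr
    _ = _ := by ring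

lemma intervalIntegrable_norm_sq_div_cos_sq (hg : Differentiable ℝ g) (hc : cos c = 0)
    (hgc : g c = 0) (hca : c - π / 2 ≤ a) (hab : a ≤ b) (hbc : b ≤ c + π / 2) :
    IntervalIntegrable (fun ξ => ‖g ξ‖ ^ 2 / cos ξ ^ 2) volume a b := by
  have hq : Continuous (dslope g c) := hg.continuous_dslope c
  refine (Continuous.intervalIntegrable (u := fun ξ => π ^ 2 / 4 * ‖dslope g c ξ‖ ^ 2)
    (by fun_prop) a b).mono_fun'
    ((hg.continuous.norm.pow 2).measurable.div
      (continuous_cos.pow 2).measurable).aestronglyMeasurable ?_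
  rw [uIoc_of_le hab]
  filter_upwards [ae_restrict_mem measurableSet_Ioc] with ξ hξ
  rw [Real.norm_of_nonneg (by positivity)]
  exact norm_sq_div_cos_sq_le hc hgc (abs_le.2 ⟨by linarith [hξ.1], by linarith [hξ.2]⟩)

end CosineWeight

theorem integral_norm_sq_div_cos_sq_le {E : Type*} [NormedAddCommGroup E] [InnerProductSpace ℝ E]
    {g : ℝ → E} {a b c : ℝ} (hg : ContDiff ℝ 1 g) (hc : cos c = 0) (hgc : g c = 0)
    (hca : c - π / 2 ≤ a) (hac : a ≤ c) (hcb : c ≤ b) (hbc : b ≤ c + π / 2) :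
    ∫ ξ in a..b, ‖g ξ‖ ^ 2 / cos ξ ^ 2 ≤ π ^ 2 * ∫ ξ in a..b, ‖deriv g ξ‖ ^ 2 := by
  have hd : Differentiable ℝ g := hg.differentiable one_ne_zero
  have hq : Continuous (dslope g c) := hd.continuous_dslope c
  calc ∫ ξ in a..b, ‖g ξ‖ ^ 2 / cos ξ ^ 2
      ≤ ∫ ξ in a..b, π ^ 2 / 4 * ‖dslope g c ξ‖ ^ 2 :=
        integral_mono_on (hac.trans hcb)
          (intervalIntegrable_norm_sq_div_cos_sq hd hc hgc hca (hac.trans hcb) hbc)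
          (Continuous.intervalIntegrable (by fun_prop) _ _) fun ξ hξ =>
            norm_sq_div_cos_sq_le hc hgc (abs_le.2 ⟨by linarith [hξ.1], by linarith [hξ.2]⟩)
    _ = π ^ 2 / 4 * ∫ ξ in a..b, ‖dslope g c ξ‖ ^ 2 := intervalIntegral.integral_const_mul _ _
    _ ≤ π ^ 2 / 4 * (4 * ∫ ξ in a..b, ‖deriv g ξ‖ ^ 2) := by
        gcongr
        exact integral_norm_dslope_sq_le hg hac hcb
    _ = π ^ 2 * ∫ ξ in a..b, ‖deriv g ξ‖ ^ 2 := by ring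

/-- Hardy-type inequality at the degenerate frequencies `±π/2`: for a `2π`-periodic
`C¹` function vanishing at `±π/2`, division by `cos ξ` is controlled in `L²(−π,π)`
by one derivative. -/
theorem hardy_inequality_degenerate_freqs :
    ∃ C : ℝ, 0 < C ∧ ∀ g : ℝ → ℂ, ContDiff ℝ 1 g →
      (∀ x : ℝ, g (x + 2 * Real.pi) = g x) →
      g (Real.pi / 2) = 0 → g (-(Real.pi / 2)) = 0 →
      ∫ ξ in (-Real.pi)..Real.pi, ‖g ξ‖ ^ 2 / Real.cos ξ ^ 2 ≤
        C * ∫ ξ in (-Real.pi)..Real.pi, ‖deriv g ξ‖ ^ 2 := by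
  refine ⟨π ^ 2, by positivity, fun g hg _ hgp hgm => ?_⟩
  have hπ := pi_pos
  have hd : Differentiable ℝ g := hg.differentiable one_ne_zero
  have hcosp : cos (π / 2) = 0 := cos_pi_div_two
  have hcosm : cos (-(π / 2)) = 0 := by rw [cos_neg, cos_pi_div_two]
  have hderiv : Continuous fun ξ => ‖deriv g ξ‖ ^ 2 := by
    have := hg.continuous_deriv le_rfl
    fun_prop
  rw [← integral_add_adjacent_intervals (b := 0)
      (intervalIntegrable_norm_sq_div_cos_sq hd hcosm hgm (by linarith) (by linarith)
        (by linarith))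
      (intervalIntegrable_norm_sq_div_cos_sq hd hcosp hgp (by linarith) hπ.le (by linarith)),
    ← integral_add_adjacent_intervals (b := 0) (hderiv.intervalIntegrable _ _)
      (hderiv.intervalIntegrable _ _), mul_add]
  exact add_le_add
    (integral_norm_sq_div_cos_sq_le hg hcosm hgm (by linarith) (by linarith) (by linarith)
      (by linarith))
    (integral_norm_sq_div_cos_sq_le hg hcosp hgp (by linarith) (by linarith) (by linarith)
      (by linarith))
end
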